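/- Let a₁v₁ + ... + aₙvₙ ≤ b with each view aᵢvᵢ ranging over a finite image set Iᵢ ⊆ ℤ, and suppose current lower bounds lbᵢ ∈ Iᵢ satisfy Σᵢ lbᵢ > b. Define iteratively, for j = 1..n: low'_j = low_{j-1} - lb_j and cur_j = next(b - low'_j, I_j) (the smallest element of I_j strictly greater than b - low'_j), with low₀ = Σᵢ lbᵢ and low_j = low'_j + cur_j. Then cur_j ≤ lb_j for all j and Σⱼ cur_j > b, so the tuple (cur₁,...,curₙ) yields a valid (and at least as strong) reason for the constraint's violation as (lb₁,...,lbₙ). -/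

import Mathlib

/-!
Since `low_{j-1} > b`, the current bound `lb j` itself lies strictly above `b - low'_j`, so
`next(b - low'_j, I j)` exists and is at most `lb j`, and `low_j = low'_j + cur j > b` again.
The sums `low_j` telescope: `low_n = ∑ cur`, which is therefore still greater than `b`.
-/

namespace Finset

variable {α : Type*} [LinearOrder α] {s : Finset α} {x e : α}

/-- `s.nextAbove x` is `next(x, s)`; it defaults to `x` when no element of `s` exceeds `x`. -/
def nextAbove (s : Finset α) (x : α) : α :=
  (s.filter (x < ·)).min.untopD x

theorem nextAbove_eq_min' (h : (s.filter (x < ·)).Nonempty) :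
    s.nextAbove x = (s.filter (x < ·)).min' h := by
  rw [nextAbove, ← coe_min' h, WithTop.untopD_coe]

theorem nextAbove_mem_filter (he : e ∈ s) (hxe : x < e) : s.nextAbove x ∈ s.filter (x < ·) := by
  rw [nextAbove_eq_min' ⟨e, mem_filter.2 ⟨he, hxe⟩⟩]
  exact min'_mem _ _

theorem nextAbove_mem (he : e ∈ s) (hxe : x < e) : s.nextAbove x ∈ s :=
  (mem_filter.1 (nextAbove_mem_filter he hxe)).1

theorem lt_nextAbove (he : e ∈ s) (hxe : x < e) : x < s.nextAbove x :=
  (mem_filter.1 (nextAbove_mem_filter he hxe)).2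

theorem nextAbove_le (he : e ∈ s) (hxe : x < e) : s.nextAbove x ≤ e := by
  rw [nextAbove_eq_min' ⟨e, mem_filter.2 ⟨he, hxe⟩⟩]
  exact min'_le _ _ (mem_filter.2 ⟨he, hxe⟩)

end Finset

theorem Fin.sum_sub_eq_sub_of_succ_eq {M : Type*} [AddCommGroup M] {n : ℕ} (low : ℕ → M)
    (lb cur : Fin n → M) (hstep : ∀ j : Fin n, low (j + 1) = low j - lb j + cur j) :
    ∑ j, (cur j - lb j) = low n - low 0 := by
  rw [← Finset.sum_range_sub, ← Fin.sum_univ_eq_sum_range (fun k => low (k + 1) - low k)]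
  refine Finset.sum_congr rfl fun j _ => ?_
  rw [hstep]
  abel

section Strengthening

open Finset

variable {α : Type*} [AddCommGroup α] [LinearOrder α] {n : ℕ}
  (I : Fin n → Finset α) (lb : Fin n → α) (b : α)

/-- `strengthenedLow I lb b k` is `low_k`; it stays constant once `k ≥ n`. -/
def strengthenedLow : ℕ → α
  | 0 => ∑ i, lb i
  | k + 1 =>
    if h : k < n then
      strengthenedLow k - lb ⟨k, h⟩ + (I ⟨k, h⟩).nextAbove (b - (strengthenedLow k - lb ⟨k, h⟩))
    else strengthenedLow k

def strengthenedReason (j : Fin n) : α :=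
  (I j).nextAbove (b - (strengthenedLow I lb b j - lb j))

theorem strengthenedLow_succ (j : Fin n) :
    strengthenedLow I lb b (j + 1) =
      strengthenedLow I lb b j - lb j + strengthenedReason I lb b j := by
  simp [strengthenedLow, strengthenedReason]

variable [IsOrderedAddMonoid α] {I lb b}

theorem lt_strengthenedLow (hlb : ∀ i, lb i ∈ I i) (hviol : b < ∑ i, lb i) (k : ℕ) :
    b < strengthenedLow I lb b k := by
  induction k with
  | zero => exact hviol
  | succ k ih =>
    by_cases hk : k < n
    · have hcand : b - (strengthenedLow I lb b k - lb ⟨k, hk⟩) < lb ⟨k, hk⟩ := by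
        rwa [sub_lt_iff_lt_add, add_sub_cancel]
      rw [strengthenedLow, dif_pos hk]
      exact sub_lt_iff_lt_add'.1 (lt_nextAbove (hlb ⟨k, hk⟩) hcand)
    · rwa [strengthenedLow, dif_neg hk]

theorem sub_strengthenedLow_sub_lt (hlb : ∀ i, lb i ∈ I i) (hviol : b < ∑ i, lb i) (j : Fin n) :
    b - (strengthenedLow I lb b j - lb j) < lb j := by
  rw [sub_lt_iff_lt_add, add_sub_cancel]
  exact lt_strengthenedLow hlb hviol j

theorem strengthenedReason_le (hlb : ∀ i, lb i ∈ I i) (hviol : b < ∑ i, lb i) (j : Fin n) :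
    strengthenedReason I lb b j ≤ lb j :=
  nextAbove_le (hlb j) (sub_strengthenedLow_sub_lt hlb hviol j)

theorem lt_sum_strengthenedReason (hlb : ∀ i, lb i ∈ I i) (hviol : b < ∑ i, lb i) :
    b < ∑ j, strengthenedReason I lb b j := by
  have htele := Fin.sum_sub_eq_sub_of_succ_eq _ _ _ (strengthenedLow_succ I lb b)
  rw [sum_sub_distrib, strengthenedLow, sub_left_inj] at htele
  exact htele ▸ lt_strengthenedLow hlb hviol n

end Strengthening

/-- The strengthened reason computed by `PropagateReification` at propagation
strength 4: iterating `low'_j = low_{j-1} - lb j`, `cur j = next(b - low'_j, I j)`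
and `low_j = low'_j + cur j` (0-indexed here) yields values `cur j ≤ lb j` with
`∑ cur > b`, a reason at least as strong as the current lower bounds. -/
theorem propagate_reification_strengthening (n : ℕ) (I : Fin n → Finset ℤ)
    (lb : Fin n → ℤ) (hlb : ∀ i, lb i ∈ I i) (b : ℤ)
    (hviol : (∑ i, lb i) > b) :
    ∃ cur : Fin n → ℤ, ∃ low : ℕ → ℤ,
      low 0 = (∑ i, lb i) ∧
      (∀ j : Fin n,
        cur j ∈ I j ∧
        b - (low j.val - lb j) < cur j ∧
        (∀ e ∈ I j, b - (low j.val - lb j) < e → cur j ≤ e) ∧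
        low (j.val + 1) = (low j.val - lb j) + cur j) ∧
      (∀ j, cur j ≤ lb j) ∧ (∑ j, cur j) > b := by
  refine ⟨strengthenedReason I lb b, strengthenedLow I lb b, rfl, fun j => ?_,
    strengthenedReason_le hlb hviol, lt_sum_strengthenedReason hlb hviol⟩
  have hcand := sub_strengthenedLow_sub_lt hlb hviol j
  exact ⟨Finset.nextAbove_mem (hlb j) hcand, Finset.lt_nextAbove (hlb j) hcand,
    fun e he hlt => Finset.nextAbove_le he hlt, strengthenedLow_succ I lb b j⟩
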